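/- arXiv:1404.7734 — 2 statements merged into one kernel-verified Lean document; each statement's English description precedes it below -/
import Mathlib

section
/- For every n ∈ ℕ and every k with 1 ≤ k ≤ stb_max(n), there exists an AF F such that |Arg_{stb(F)}| = n and |stb(F)| = k, where Arg_{stb(F)} is the union of all stable extensions of F. -/
structure AF where
  A : Finset ℕ
  R : Set (ℕ × ℕ)
  R_sub : ∀ p ∈ R, p.1 ∈ A ∧ p.2 ∈ A

namespace AF

def cf (F : AF) : Set (Set ℕ) :=
  {S | S ⊆ ↑F.A ∧ ∀ a ∈ S, ∀ b ∈ S, (a, b) ∉ F.R}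

def defends (F : AF) (S : Set ℕ) (a : ℕ) : Prop :=
  ∀ b, (b, a) ∈ F.R → ∃ s ∈ S, (s, b) ∈ F.R

def adm (F : AF) : Set (Set ℕ) :=
  {S | S ∈ F.cf ∧ ∀ a ∈ S, F.defends S a}

def rng (F : AF) (S : Set ℕ) : Set ℕ :=
  S ∪ {b | ∃ s ∈ S, (s, b) ∈ F.R}

def naive (F : AF) : Set (Set ℕ) :=
  {S | S ∈ F.cf ∧ ∀ T ∈ F.cf, S ⊆ T → S = T}

def stb (F : AF) : Set (Set ℕ) :=
  {S | S ∈ F.cf ∧ ∀ a ∈ F.A, a ∉ S → ∃ s ∈ S, (s, a) ∈ F.R}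

def pref (F : AF) : Set (Set ℕ) :=
  {S | S ∈ F.adm ∧ ∀ T ∈ F.adm, S ⊆ T → S = T}

def stage (F : AF) : Set (Set ℕ) :=
  {S | S ∈ F.cf ∧ ¬ ∃ T ∈ F.cf, F.rng S ⊂ F.rng T}

def sem (F : AF) : Set (Set ℕ) :=
  {S | S ∈ F.adm ∧ ¬ ∃ T ∈ F.adm, F.rng S ⊂ F.rng T}

end AF

abbrev Semantics := AF → Set (Set ℕ)

def StandardSemantics : Set Semantics :=
  {AF.naive, AF.stb, AF.stage, AF.pref, AF.sem}

def AFCompact (σ : Semantics) (F : AF) : Prop :=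
  ∀ a ∈ F.A, ∃ S ∈ σ F, a ∈ S

def CAF (σ : Semantics) : Set AF := {F | AFCompact σ F}

def ArgS (𝕊 : Set (Set ℕ)) : Set ℕ := ⋃₀ 𝕊

def PairsS (𝕊 : Set (Set ℕ)) : Set (ℕ × ℕ) :=
  {p | ∃ S ∈ 𝕊, p.1 ∈ S ∧ p.2 ∈ S}

def IsExtensionSet (𝕊 : Set (Set ℕ)) : Prop := (ArgS 𝕊).Finite

def AFStep (F : AF) (a b : ℕ) : Prop := (a, b) ∈ F.R ∨ (b, a) ∈ F.R

def AFConnected (F : AF) : Prop :=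
  ∀ a ∈ F.A, ∀ b ∈ F.A, Relation.ReflTransGen (AFStep F) a b

def sameComp (F : AF) (a b : ℕ) : Prop := Relation.ReflTransGen (AFStep F) a b

def comps (F : AF) : Set (Set ℕ) :=
  {K | ∃ a ∈ F.A, K = {b ∈ (↑F.A : Set ℕ) | sameComp F a b}}

def nopairs (𝕊 : Set (Set ℕ)) (a b : ℕ) : Prop :=
  a ∈ ArgS 𝕊 ∧ b ∈ ArgS 𝕊 ∧ (a, b) ∉ PairsS 𝕊

def compsS (𝕊 : Set (Set ℕ)) : Set (Set ℕ) :=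
  {K | ∃ a ∈ ArgS 𝕊, K = {b ∈ ArgS 𝕊 | Relation.ReflTransGen (nopairs 𝕊) a b}}

noncomputable def sigmaMax (σ : Semantics) (n : ℕ) : ℕ :=
  sSup {k | ∃ F : AF, F.A.card = n ∧ (σ F).ncard = k}

noncomputable def sigmaMaxCon (σ : Semantics) (n : ℕ) : ℕ :=
  sSup {k | ∃ F : AF, F.A.card = n ∧ AFConnected F ∧ (σ F).ncard = k}

noncomputable def sigmaMax2 (σ : Semantics) (n : ℕ) : ℕ :=
  sSup ({k | ∃ F : AF, F.A.card = n ∧ (σ F).ncard = k} \ {sigmaMax σ n})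

def cfSet (𝕊 : Set (Set ℕ)) : Set (Set ℕ) :=
  {S | S ⊆ ArgS 𝕊 ∧ ∀ a ∈ S, ∀ b ∈ S, (a, b) ∈ PairsS 𝕊}

def plusSet (𝕊 : Set (Set ℕ)) : Set (Set ℕ) :=
  {S | S ∈ cfSet 𝕊 ∧ ∀ T ∈ cfSet 𝕊, S ⊆ T → S = T}

def minusSet (𝕊 : Set (Set ℕ)) : Set (Set ℕ) := plusSet 𝕊 \ 𝕊

def Sig (σ : Semantics) : Set (Set (Set ℕ)) := {𝕊 | ∃ F : AF, σ F = 𝕊}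

def cSig (σ : Semantics) : Set (Set (Set ℕ)) :=
  {𝕊 | ∃ F : AF, AFCompact σ F ∧ σ F = 𝕊}

def Pcon (σ : Semantics) (n : ℕ) : Set ℕ :=
  {k | ∃ F : AF, AFCompact σ F ∧ AFConnected F ∧ F.A.card = n ∧ (σ F).ncard = k}

open Classical in
noncomputable def restrictAF (F : AF) (K : Set ℕ) : AF where
  A := F.A.filter (fun a => a ∈ K)
  R := {p | p ∈ F.R ∧ p.1 ∈ K ∧ p.2 ∈ K}
  R_sub := fun p hp => by
    have h := F.R_sub p hp.1
    simp only [Finset.mem_filter]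
    exact ⟨⟨h.1, hp.2.1⟩, ⟨h.2, hp.2.2⟩⟩

def IsExclusionMapping (𝕊 : Set (Set ℕ)) (Rm : Set (ℕ × ℕ)) : Prop :=
  ∃ f : Set ℕ → ℕ,
    (∀ S ∈ minusSet 𝕊, f S ∈ ArgS 𝕊 ∧ f S ∉ S) ∧
    Rm = {p | ∃ S ∈ minusSet 𝕊, p.1 ∈ S ∧ p.2 = f S ∧ p ∉ PairsS 𝕊}

def Independent (𝕊 : Set (Set ℕ)) : Prop :=
  ∃ Rm : Set (ℕ × ℕ), IsExclusionMapping 𝕊 Rm ∧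
    (∀ a b, (a, b) ∈ Rm → (b, a) ∈ Rm → a = b) ∧
    ∀ S ∈ 𝕊, ∀ a ∈ ArgS 𝕊 \ S, ∃ s ∈ S, (s, a) ∉ Rm ∪ PairsS 𝕊

def ConflictExplicit (σ : Semantics) (F : AF) : Prop :=
  ∀ a ∈ F.A, ∀ b ∈ F.A, (a, b) ∉ PairsS (σ F) → (a, b) ∈ F.R ∨ (b, a) ∈ F.R

noncomputable def canonicalCF (𝕊 : Set (Set ℕ)) (h : IsExtensionSet 𝕊) : AF where
  A := h.toFinset
  R := {p | p.1 ∈ ArgS 𝕊 ∧ p.2 ∈ ArgS 𝕊 ∧ p ∉ PairsS 𝕊}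
  R_sub := fun p hp => by
    exact ⟨(Set.Finite.mem_toFinset (s := ArgS 𝕊) (hs := h)).2 hp.1,
      (Set.Finite.mem_toFinset (s := ArgS 𝕊) (hs := h)).2 hp.2.1⟩
/-!
Start from an AF `F₀` on `n` arguments with `j ≥ k` stable extensions and keep `k` of them.
Each unwanted stable extension `T` is removed by a fresh self-attacking argument attacked exactly by
the arguments outside `T`: a stable extension must attack it, and among stable extensions only `T`
(being ⊆-minimal) cannot. The union of the surviving extensions has at most `n` arguments; fresh
unattacked arguments belong to every stable extension and pad the union up to exactly `n`.
-/

open Set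

lemma Nat.exists_mem_le_of_le_sSup {s : Set ℕ} {k : ℕ} (hk : k ≠ 0) (h : k ≤ sSup s) :
    ∃ j ∈ s, k ≤ j := by
  rcases s.eq_empty_or_nonempty with rfl | hs
  · simp only [csSup_empty, bot_eq_zero', nonpos_iff_eq_zero] at h
    exact absurd h hk
  · obtain ⟨j, hj, hkj⟩ := exists_lt_of_lt_csSup hs (show k - 1 < sSup s by omega)
    exact ⟨j, hj, by omega⟩

namespace AF

variable {F : AF}

lemma argS_stb_subset (F : AF) : ArgS F.stb ⊆ ↑F.A :=
  sUnion_subset fun _ hS => hS.1.1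

lemma stb_finite (F : AF) : F.stb.Finite :=
  F.A.finite_toSet.finite_subsets.subset fun _ hS => hS.1.1

lemma eq_of_mem_stb_of_subset {S T : Set ℕ} (hS : S ∈ F.stb) (hT : T ∈ F.stb) (hST : S ⊆ T) :
    S = T := by
  refine hST.antisymm fun a haT => ?_
  by_contra haS
  obtain ⟨s, hs, hsa⟩ := hS.2 a (hT.1.1 haT) haS
  exact hT.1.2 s (hST hs) a haT hsa

def addIsolated (F : AF) (b : ℕ) : AF where
  A := insert b F.A
  R := F.R
  R_sub p hp :=
    ⟨Finset.mem_insert_of_mem (F.R_sub p hp).1, Finset.mem_insert_of_mem (F.R_sub p hp).2⟩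

lemma stb_addIsolated {b : ℕ} (hb : b ∉ F.A) : (F.addIsolated b).stb = insert b '' F.stb := by
  have hbR : ∀ p ∈ F.R, p.1 ≠ b ∧ p.2 ≠ b := fun p hp =>
    ⟨ne_of_mem_of_not_mem (F.R_sub p hp).1 hb, ne_of_mem_of_not_mem (F.R_sub p hp).2 hb⟩
  ext S
  constructor
  · rintro ⟨⟨hSA, hScf⟩, hSatt⟩
    have hbS : b ∈ S := by
      by_contra hbS
      obtain ⟨s, -, hsb⟩ := hSatt b (Finset.mem_insert_self b F.A) hbS
      exact (hbR _ hsb).2 rfl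
    refine ⟨S \ {b}, ⟨⟨fun a ha => ?_, fun a ha c hc => hScf a ha.1 c hc.1⟩, fun a ha haS => ?_⟩,
      insert_sdiff_singleton.trans (insert_eq_of_mem hbS)⟩
    · exact (Finset.mem_insert.1 (hSA ha.1)).resolve_left ha.2
    · have hab : a ≠ b := ne_of_mem_of_not_mem ha hb
      obtain ⟨s, hs, hsa⟩ := hSatt a (Finset.mem_insert_of_mem ha) (by simpa [hab] using haS)
      exact ⟨s, ⟨hs, (hbR _ hsa).1⟩, hsa⟩
  · rintro ⟨S, ⟨⟨hSA, hScf⟩, hSatt⟩, rfl⟩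
    refine ⟨⟨?_, ?_⟩, ?_⟩
    · simpa [addIsolated, insert_subset_iff] using hSA.trans (subset_insert b _)
    · rintro a ha c hc hac
      have ha' : a ∈ S := (mem_insert_iff.1 ha).resolve_left (hbR _ hac).1
      have hc' : c ∈ S := (mem_insert_iff.1 hc).resolve_left (hbR _ hac).2
      exact hScf a ha' c hc' hac
    · intro a ha haS
      have ha' : a ∈ F.A := (Finset.mem_insert.1 ha).resolve_left fun h => haS (h ▸ mem_insert a S)
      obtain ⟨s, hs, hsa⟩ := hSatt a ha' fun h => haS (mem_insert_of_mem b h)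
      exact ⟨s, mem_insert_of_mem b hs, hsa⟩

def killExtension (F : AF) (T : Set ℕ) (z : ℕ) : AF where
  A := insert z F.A
  R := {p | p ∈ F.R ∨ p = (z, z) ∨ (p.1 ∈ F.A ∧ p.1 ∉ T ∧ p.2 = z)}
  R_sub := by
    rintro ⟨a, c⟩ (hp | hp | ⟨ha, -, hc⟩)
    · exact ⟨Finset.mem_insert_of_mem (F.R_sub _ hp).1, Finset.mem_insert_of_mem (F.R_sub _ hp).2⟩
    · obtain ⟨rfl, rfl⟩ := Prod.mk.inj hp
      exact ⟨Finset.mem_insert_self _ _, Finset.mem_insert_self _ _⟩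
    · exact ⟨Finset.mem_insert_of_mem ha, hc ▸ Finset.mem_insert_self _ _⟩

lemma stb_killExtension {T : Set ℕ} {z : ℕ} (hT : T ∈ F.stb) (hz : z ∉ F.A) :
    (F.killExtension T z).stb = F.stb \ {T} := by
  ext S
  constructor
  · rintro ⟨⟨hSA, hScf⟩, hSatt⟩
    have hzS : z ∉ S := fun h => hScf z h z h (Or.inr (Or.inl rfl))
    have hSA' : S ⊆ ↑F.A := fun a ha =>
      (Finset.mem_insert.1 (hSA ha)).resolve_left fun h => hzS (h ▸ ha)
    refine ⟨⟨⟨hSA', fun a ha c hc hac => hScf a ha c hc (Or.inl hac)⟩, fun a ha haS => ?_⟩, ?_⟩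
    · obtain ⟨s, hs, hsa | hsa | hsa⟩ := hSatt a (Finset.mem_insert_of_mem ha) haS
      · exact ⟨s, hs, hsa⟩
      · exact absurd ((Prod.mk.inj hsa).1 ▸ hs) hzS
      · exact absurd (hsa.2.2 ▸ ha) hz
    · rintro rfl
      obtain ⟨s, hs, hsz | hsz | hsz⟩ := hSatt z (Finset.mem_insert_self z F.A) hzS
      · exact hz (F.R_sub _ hsz).2
      · exact hzS ((Prod.mk.inj hsz).1 ▸ hs)
      · exact hsz.2.1 hs
  · rintro ⟨hS, hST : S ≠ T⟩
    have hzS : z ∉ S := fun h => hz (hS.1.1 h)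
    refine ⟨⟨hS.1.1.trans (by simp [killExtension]), ?_⟩, fun a ha haS => ?_⟩
    · rintro a ha c hc (hac | hac | hac)
      · exact hS.1.2 a ha c hc hac
      · exact hzS ((Prod.mk.inj hac).1 ▸ ha)
      · exact hzS (hac.2.2 ▸ hc)
    · rcases Finset.mem_insert.1 ha with rfl | ha
      · obtain ⟨s, hs, hsT⟩ := not_subset.1 fun h => hST (eq_of_mem_stb_of_subset hS hT h)
        exact ⟨s, hs, Or.inr (Or.inr ⟨hS.1.1 hs, hsT, rfl⟩)⟩
      · obtain ⟨s, hs, hsa⟩ := hS.2 a ha haS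
        exact ⟨s, hs, Or.inl hsa⟩

lemma exists_stb_eq_diff_singleton (F : AF) (T : Set ℕ) : ∃ G : AF, G.stb = F.stb \ {T} := by
  by_cases hT : T ∈ F.stb
  · obtain ⟨z, hz⟩ := Infinite.exists_notMem_finset F.A
    exact ⟨_, stb_killExtension hT hz⟩
  · exact ⟨F, (sdiff_singleton_eq_self hT).symm⟩

lemma exists_stb_eq_diff (F : AF) {D : Set (Set ℕ)} (hD : D.Finite) :
    ∃ G : AF, G.stb = F.stb \ D := by
  induction D, hD using Set.Finite.induction_on with
  | empty => exact ⟨F, sdiff_empty.symm⟩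
  | @insert T D _ _ ih =>
    obtain ⟨G, hG⟩ := ih
    obtain ⟨H, hH⟩ := G.exists_stb_eq_diff_singleton T
    exact ⟨H, by rw [hH, hG, sdiff_sdiff, union_comm, singleton_union]⟩

lemma exists_stb_eq_of_subset {𝕋 : Set (Set ℕ)} (h𝕋 : 𝕋 ⊆ F.stb) : ∃ G : AF, G.stb = 𝕋 := by
  obtain ⟨G, hG⟩ := F.exists_stb_eq_diff (F.stb_finite.sdiff (t := 𝕋))
  exact ⟨G, hG.trans (sdiff_sdiff_cancel_left h𝕋)⟩

lemma exists_stb_ncard_eq_argS_ncard_add (hF : F.stb.ncard ≠ 0) (j : ℕ) :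
    ∃ G : AF, G.stb.ncard = F.stb.ncard ∧ (ArgS G.stb).ncard = (ArgS F.stb).ncard + j := by
  induction j with
  | zero => exact ⟨F, rfl, rfl⟩
  | succ j ih =>
    obtain ⟨G, hGk, hGn⟩ := ih
    obtain ⟨b, hb⟩ := Infinite.exists_notMem_finset G.A
    have hbS : ∀ S ∈ G.stb, b ∉ S := fun S hS h => hb (hS.1.1 h)
    have hne : G.stb.Nonempty := nonempty_of_ncard_ne_zero (hGk ▸ hF)
    refine ⟨G.addIsolated b, ?_, ?_⟩
    · rw [stb_addIsolated hb, InjOn.ncard_image, hGk]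
      intro S₁ h₁ S₂ h₂ h
      simpa [hbS S₁ h₁, hbS S₂ h₂] using congrArg (· \ {b}) h
    · have hArg : ArgS (insert b '' G.stb) = insert b (ArgS G.stb) := by
        obtain ⟨S₀, hS₀⟩ := hne
        ext a
        simp only [ArgS, sUnion_image, mem_iUnion, mem_insert_iff, mem_sUnion, exists_prop]
        exact ⟨fun ⟨S, hS, ha⟩ => ha.imp_right fun ha => ⟨S, hS, ha⟩,
          fun ha => ha.elim (fun ha => ⟨S₀, hS₀, Or.inl ha⟩) fun ⟨S, hS, ha⟩ => ⟨S, hS, Or.inr ha⟩⟩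
      rw [stb_addIsolated hb, hArg, ncard_insert_of_notMem (fun h => hb (G.argS_stb_subset h))
        (G.A.finite_toSet.subset G.argS_stb_subset), hGn, add_assoc]

end AF

theorem noncompact_stable_realizable (n k : ℕ) (h1 : 1 ≤ k)
    (h2 : k ≤ sigmaMax AF.stb n) :
    ∃ F : AF, (ArgS (AF.stb F)).ncard = n ∧ (AF.stb F).ncard = k := by
  obtain ⟨_, ⟨F₀, hF₀, rfl⟩, hk⟩ := Nat.exists_mem_le_of_le_sSup (by omega) h2
  obtain ⟨𝕋, h𝕋, h𝕋k⟩ := exists_subset_card_eq hk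
  obtain ⟨F₁, hF₁⟩ := AF.exists_stb_eq_of_subset h𝕋
  have hArg : (ArgS F₁.stb).ncard ≤ n := by
    rw [← hF₀, ← ncard_coe_finset, hF₁]
    exact ncard_le_ncard ((sUnion_mono h𝕋).trans F₀.argS_stb_subset)
  obtain ⟨F₂, hk₂, hn₂⟩ :=
    AF.exists_stb_ncard_eq_argS_ncard_add (by rw [hF₁]; omega) (n - (ArgS F₁.stb).ncard)
  exact ⟨F₂, by omega, by rw [hk₂, hF₁, h𝕋k]⟩
end

section
/- For every stb-compact AF F that is conflict-explicit under stable semantics, the extension-set stb(F) is independent. -/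
/-! Every T ∈ 𝕊⁻ is conflict-free in F (pairs never attack each other) but not stable, so some
argument outside T is not attacked by T; let f(T) be such an argument. Then no edge of R_𝕊 is an
attack. Two opposite edges of R_𝕊 would join a non-pair that, by conflict-explicitness, is an
attack, so R_𝕊 is antisymmetric; and a stable S attacks every a ∉ S by some s ∈ S, and that
(s, a) is neither a pair nor an edge of R_𝕊. -/

namespace AF

variable (F : AF)

theorem argS_subset_of_subset_cf {𝕊 : Set (Set ℕ)} (h𝕊 : 𝕊 ⊆ F.cf) : ArgS 𝕊 ⊆ ↑F.A := by
  rintro x ⟨S, hS, hxS⟩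
  exact (h𝕊 hS).1 hxS

theorem notMem_pairsS_of_mem_R {𝕊 : Set (Set ℕ)} (h𝕊 : 𝕊 ⊆ F.cf) {a b : ℕ}
    (hab : (a, b) ∈ F.R) : (a, b) ∉ PairsS 𝕊 := by
  rintro ⟨S, hS, ha, hb⟩
  exact (h𝕊 hS).2 a ha b hb hab

theorem cfSet_subset_cf {𝕊 : Set (Set ℕ)} (h𝕊 : 𝕊 ⊆ F.cf) : cfSet 𝕊 ⊆ F.cf :=
  fun _ ⟨hTArg, hTpairs⟩ =>
    ⟨hTArg.trans (F.argS_subset_of_subset_cf h𝕊),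
      fun a ha b hb hab => F.notMem_pairsS_of_mem_R h𝕊 hab (hTpairs a ha b hb)⟩

theorem stb_subset_cf : F.stb ⊆ F.cf := fun _ hS => hS.1

theorem argS_stb_of_compact (hcomp : AFCompact AF.stb F) : ArgS F.stb = ↑F.A := by
  refine subset_antisymm (F.argS_subset_of_subset_cf F.stb_subset_cf) fun x hx => ?_
  obtain ⟨S, hS, hxS⟩ := hcomp x hx
  exact ⟨S, hS, hxS⟩

theorem exists_unattacked_of_mem_minusSet_stb {T : Set ℕ} (hT : T ∈ minusSet F.stb) :
    ∃ a ∈ F.A, a ∉ T ∧ ∀ s ∈ T, (s, a) ∉ F.R := by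
  obtain ⟨⟨hTcf, -⟩, hTstb⟩ := hT
  by_contra! h
  exact hTstb ⟨F.cfSet_subset_cf F.stb_subset_cf hTcf, h⟩

theorem exists_unattacked_selector :
    ∃ f : Set ℕ → ℕ, ∀ T ∈ minusSet F.stb, f T ∈ F.A ∧ f T ∉ T ∧ ∀ s ∈ T, (s, f T) ∉ F.R := by
  have h : ∀ T, ∃ a, T ∈ minusSet F.stb → a ∈ F.A ∧ a ∉ T ∧ ∀ s ∈ T, (s, a) ∉ F.R := by
    intro T
    by_cases hT : T ∈ minusSet F.stb
    · obtain ⟨a, ha⟩ := F.exists_unattacked_of_mem_minusSet_stb hT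
      exact ⟨a, fun _ => ha⟩
    · exact ⟨0, fun h => absurd h hT⟩
  choose f hf using h
  exact ⟨f, hf⟩

end AF

def exclusionRel (𝕊 : Set (Set ℕ)) (f : Set ℕ → ℕ) : Set (ℕ × ℕ) :=
  {p | ∃ S ∈ minusSet 𝕊, p.1 ∈ S ∧ p.2 = f S ∧ p ∉ PairsS 𝕊}

section exclusionRel

variable {𝕊 : Set (Set ℕ)} {f : Set ℕ → ℕ} {p : ℕ × ℕ}

theorem fst_mem_argS_of_mem_exclusionRel (hp : p ∈ exclusionRel 𝕊 f) : p.1 ∈ ArgS 𝕊 := by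
  obtain ⟨S, ⟨⟨⟨hSArg, -⟩, -⟩, -⟩, h1, -⟩ := hp
  exact hSArg h1

theorem notMem_pairsS_of_mem_exclusionRel (hp : p ∈ exclusionRel 𝕊 f) : p ∉ PairsS 𝕊 := by
  obtain ⟨-, -, -, -, hnP⟩ := hp
  exact hnP

theorem notMem_R_of_mem_exclusionRel {F : AF} (hf : ∀ S ∈ minusSet 𝕊, ∀ s ∈ S, (s, f S) ∉ F.R)
    (hp : p ∈ exclusionRel 𝕊 f) : p ∉ F.R := by
  obtain ⟨S, hS, h1, h2, -⟩ := hp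
  obtain ⟨a, b⟩ := p
  cases h2
  exact hf S hS a h1

end exclusionRel

theorem conflict_explicit_compact_independent (F : AF)
    (hcomp : AFCompact AF.stb F) (hce : ConflictExplicit AF.stb F) :
    Independent (AF.stb F) := by
  obtain ⟨f, hf⟩ := F.exists_unattacked_selector
  have hArg := F.argS_stb_of_compact hcomp
  have hnoR : ∀ {p}, p ∈ exclusionRel F.stb f → p ∉ F.R :=
    notMem_R_of_mem_exclusionRel fun S hS => (hf S hS).2.2
  refine ⟨exclusionRel F.stb f, ⟨f, fun S hS => ⟨hArg ▸ (hf S hS).1, (hf S hS).2.1⟩, rfl⟩,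
    ?antisymm, ?separation⟩
  case antisymm =>
    intro a b hab hba
    have hA : ∀ {x y}, (x, y) ∈ exclusionRel F.stb f → x ∈ F.A := fun h =>
      Finset.mem_coe.1 (hArg ▸ fst_mem_argS_of_mem_exclusionRel h)
    have hconflict := hce a (hA hab) b (hA hba) (notMem_pairsS_of_mem_exclusionRel hab)
    exact (hconflict.elim (hnoR hab) (hnoR hba)).elim
  case separation =>
    rintro S hS a ⟨ha, haS⟩
    obtain ⟨s, hsS, hsa⟩ := hS.2 a (Finset.mem_coe.1 (hArg ▸ ha)) haS
    exact ⟨s, hsS, fun h => h.elim (hnoR · hsa) (F.notMem_pairsS_of_mem_R F.stb_subset_cf hsa)⟩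
end
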